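/- For the Case 2 matrix T₀ ∈ M₅(ℂ) with superdiagonal entries (√3, 1/√2, 1/√2, √3), the operator norm ‖T₀‖ = √3, which is strictly greater than ‖S‖ = 2/√3. -/

import Mathlib

/-!
Both matrices have at most one nonzero entry in each row and in each column. Such a matrix is an
orthogonal sum of the rank-one maps `e j ↦ A i j • e i` (with distinct `i` and distinct `j`), so its
operator norm is the largest modulus of an entry: `‖A x‖² = ∑ |A i j|² |x j|² ≤ (max |A i j|)² ‖x‖²`,
with equality at the basis vector of a column where the maximum is attained.
-/

open Matrix

namespace Matrix

variable {𝕜 n : Type*} [RCLike 𝕜] [Fintype n]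

def IsPartialMonomial (A : Matrix n n 𝕜) : Prop :=
  ∀ i j i' j', A i j ≠ 0 → A i' j' ≠ 0 → (i = i' ↔ j = j')

namespace IsPartialMonomial

variable {A : Matrix n n 𝕜}

theorem exists_forall_row_eq_zero (hA : A.IsPartialMonomial) (i : n) :
    ∃ j, ∀ k ≠ j, A i k = 0 := by
  by_cases h : ∃ j, A i j ≠ 0
  · obtain ⟨j, hj⟩ := h
    exact ⟨j, fun k hk => by_contra fun hik => hk ((hA i k i j hik hj).1 rfl)⟩
  · simp only [not_exists, not_not] at h
    exact ⟨i, fun k _ => h k⟩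

theorem exists_forall_col_eq_zero (hA : A.IsPartialMonomial) (j : n) :
    ∃ i, ∀ k ≠ i, A k j = 0 := by
  by_cases h : ∃ i, A i j ≠ 0
  · obtain ⟨i, hi⟩ := h
    exact ⟨i, fun k hk => by_contra fun hkj => hk ((hA k j i j hkj hi).2 rfl)⟩
  · simp only [not_exists, not_not] at h
    exact ⟨j, fun k _ => h k⟩

theorem norm_sum_row_mul_sq (hA : A.IsPartialMonomial) (i : n) (x : n → 𝕜) :
    ‖∑ j, A i j * x j‖ ^ 2 = ∑ j, ‖A i j‖ ^ 2 * ‖x j‖ ^ 2 := by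
  obtain ⟨j, hj⟩ := hA.exists_forall_row_eq_zero i
  rw [Finset.sum_eq_single j (fun k _ hk => by simp [hj k hk]) (by simp),
    Finset.sum_eq_single j (fun k _ hk => by simp [hj k hk]) (by simp), norm_mul, mul_pow]

theorem sum_norm_sq_col_le (hA : A.IsPartialMonomial) {c : ℝ} (hc : ∀ i j, ‖A i j‖ ≤ c)
    (j : n) : ∑ i, ‖A i j‖ ^ 2 ≤ c ^ 2 := by
  obtain ⟨i, hi⟩ := hA.exists_forall_col_eq_zero j
  rw [Finset.sum_eq_single i (fun k _ hk => by simp [hi k hk]) (by simp)]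
  exact pow_le_pow_left₀ (norm_nonneg _) (hc i j) 2

variable [DecidableEq n]

theorem norm_toEuclideanCLM_le (hA : A.IsPartialMonomial) {c : ℝ} (hc₀ : 0 ≤ c)
    (hc : ∀ i j, ‖A i j‖ ≤ c) : ‖toEuclideanCLM (𝕜 := 𝕜) A‖ ≤ c := by
  refine ContinuousLinearMap.opNorm_le_bound _ hc₀ fun x => le_of_sq_le_sq ?_ (by positivity)
  calc ‖toEuclideanCLM (𝕜 := 𝕜) A x‖ ^ 2 = ∑ i, ‖∑ j, A i j * x j‖ ^ 2 := by
        simp [EuclideanSpace.norm_sq_eq, mulVec, dotProduct]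
    _ = ∑ j, (∑ i, ‖A i j‖ ^ 2) * ‖x j‖ ^ 2 := by
        simp_rw [hA.norm_sum_row_mul_sq, Finset.sum_mul]
        exact Finset.sum_comm
    _ ≤ ∑ j, c ^ 2 * ‖x j‖ ^ 2 := by
        gcongr with j
        exact hA.sum_norm_sq_col_le hc j
    _ = (c * ‖x‖) ^ 2 := by rw [mul_pow, EuclideanSpace.norm_sq_eq, Finset.mul_sum]

end IsPartialMonomial

theorem norm_apply_le_norm_toEuclideanCLM [DecidableEq n] (A : Matrix n n 𝕜) (i j : n) :
    ‖A i j‖ ≤ ‖toEuclideanCLM (𝕜 := 𝕜) A‖ := by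
  calc ‖A i j‖ = ‖(toEuclideanCLM (𝕜 := 𝕜) A (EuclideanSpace.single j 1)).ofLp i‖ := by
        simp [ofLp_toEuclideanCLM]
    _ ≤ ‖toEuclideanCLM (𝕜 := 𝕜) A (EuclideanSpace.single j 1)‖ := PiLp.norm_apply_le _ i
    _ ≤ ‖toEuclideanCLM (𝕜 := 𝕜) A‖ := by
        simpa using (toEuclideanCLM (𝕜 := 𝕜) A).le_opNorm (EuclideanSpace.single j 1)

theorem IsPartialMonomial.norm_toEuclideanCLM_eq [DecidableEq n] {A : Matrix n n 𝕜}
    (hA : A.IsPartialMonomial) {c : ℝ} (hc : ∀ i j, ‖A i j‖ ≤ c) {i j : n} (hij : ‖A i j‖ = c) :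
    ‖toEuclideanCLM (𝕜 := 𝕜) A‖ = c :=
  le_antisymm (hA.norm_toEuclideanCLM_le (hij ▸ norm_nonneg _) hc)
    (hij ▸ A.norm_apply_le_norm_toEuclideanCLM i j)

theorem isPartialMonomial_of_superdiagonal {m : ℕ} {A : Matrix (Fin m) (Fin m) 𝕜}
    (h : ∀ i j, A i j ≠ 0 → (j : ℕ) = i + 1) : A.IsPartialMonomial := by
  intro i j i' j' hij hij'
  have := h i j hij
  have := h i' j' hij'
  rw [Fin.ext_iff, Fin.ext_iff]
  omega

end Matrix

theorem stmt16 :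
    let T₀ : Matrix (Fin 5) (Fin 5) ℂ :=
      !![0, (Real.sqrt 3 : ℂ), 0, 0, 0;
         0, 0, (1 / Real.sqrt 2 : ℂ), 0, 0;
         0, 0, 0, (1 / Real.sqrt 2 : ℂ), 0;
         0, 0, 0, 0, (Real.sqrt 3 : ℂ);
         0, 0, 0, 0, 0]
    let J : Matrix (Fin 5) (Fin 5) ℂ :=
      !![0, 1, 0, 0, 0;
         0, 0, 1, 0, 0;
         0, 0, 0, 1, 0;
         0, 0, 0, 0, 1;
         0, 0, 0, 0, 0]
    let S : Matrix (Fin 5) (Fin 5) ℂ := (2 / Real.sqrt 3 : ℝ) • J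
    ‖Matrix.toEuclideanCLM (𝕜 := ℂ) (n := Fin 5) T₀‖ = Real.sqrt 3 ∧
      ‖Matrix.toEuclideanCLM (𝕜 := ℂ) (n := Fin 5) S‖ = 2 / Real.sqrt 3 ∧
      Real.sqrt 3 > 2 / Real.sqrt 3 := by
  intro T₀ J S
  have habs2 : |Real.sqrt 2| = Real.sqrt 2 := abs_of_nonneg (Real.sqrt_nonneg 2)
  have habs3 : |Real.sqrt 3| = Real.sqrt 3 := abs_of_nonneg (Real.sqrt_nonneg 3)
  have hc : 0 ≤ 2 / Real.sqrt 3 := by positivity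
  have hsqrt : (Real.sqrt 2)⁻¹ ≤ Real.sqrt 3 :=
    calc (Real.sqrt 2)⁻¹ ≤ 1 := inv_le_one_of_one_le₀ (by simp [Real.one_le_sqrt])
      _ ≤ Real.sqrt 3 := by simp [Real.one_le_sqrt]
  have hT : T₀.IsPartialMonomial := isPartialMonomial_of_superdiagonal <| by
    intro i j; fin_cases i <;> fin_cases j <;> simp [T₀]
  have hS : S.IsPartialMonomial := isPartialMonomial_of_superdiagonal <| by
    intro i j; fin_cases i <;> fin_cases j <;> simp [S, J]
  refine ⟨hT.norm_toEuclideanCLM_eq (i := 0) (j := 1) ?_ (by simp [T₀]),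
    hS.norm_toEuclideanCLM_eq (i := 0) (j := 1) ?_ (by simp [S, J, habs3]), ?_⟩
  · intro i j; fin_cases i <;> fin_cases j <;> simp [T₀, habs2, habs3, hsqrt]
  · intro i j; fin_cases i <;> fin_cases j <;> simp [S, J, habs3, hc]
  · rw [gt_iff_lt, div_lt_iff₀ (by positivity), Real.mul_self_sqrt (by norm_num)]
    norm_num
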